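/- Define the sequence p₀ = 0 and p_k = s + Aᵀp_{k−1} − Eᵀ|r + Bᵀp_{k−1}| + Gᵀ|−γ + Fᵀp_{k−1}| in ℝⁿ. Under the assumptions A ≥ |B|E + |F|G and s ≥ Eᵀ|r| − Gᵀ|γ| (entrywise), with E, G entrywise nonnegative, one has p_kᵀx = J_k(x) for every k ∈ ℕ and every x ∈ ℝ₊ⁿ, where J₀ ≡ 0 and J_k(x) = min_{|u|≤Ex} max_{|w|≤Gx} [sᵀx + rᵀu − γᵀw + J_{k−1}(Ax + Bu + Fw)]. -/

import Mathlib

/-!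
By induction, `J k` is linear on the nonnegative orthant with gradient `p k`. The condition
`|B| E + |F| G ≤ A` keeps every successor state `A x + B u + F w` in the orthant, so the payoff
of step `k + 1` is affine and separable in `u` and `w`. Over the boxes `|u| ≤ E x`, `|w| ≤ G x`
such a payoff `a + c ⬝ u + d ⬝ w` has min-max value `a - |c| ⬝ E x + |d| ⬝ G x`, attained at
`u = -sign c * E x` and `w = sign d * G x`, and this value is `p (k + 1) ⬝ x`.
-/

open Matrix

section Box

variable {R ι κ : Type*} [CommRing R] [LinearOrder R] [IsStrictOrderedRing R] [Fintype ι]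
  [Fintype κ]

lemma abs_dotProduct_le_of_abs_le {c u b : ι → R} (hu : ∀ i, |u i| ≤ b i) :
    |c ⬝ᵥ u| ≤ (fun i => |c i|) ⬝ᵥ b :=
  (Finset.abs_sum_le_sum_abs _ _).trans <| Finset.sum_le_sum fun i _ => by
    rw [abs_mul]
    exact mul_le_mul_of_nonneg_left (hu i) (abs_nonneg _)

lemma exists_abs_le_dotProduct_eq (c : ι → R) {b : ι → R} (hb : ∀ i, 0 ≤ b i) :
    ∃ u : ι → R, (∀ i, |u i| ≤ b i) ∧ c ⬝ᵥ u = (fun i => |c i|) ⬝ᵥ b := by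
  refine ⟨fun i => if 0 ≤ c i then b i else -b i, fun i => ?_,
    Finset.sum_congr rfl fun i _ => ?_⟩
  · dsimp only
    split_ifs <;> simp [abs_of_nonneg (hb i)]
  · dsimp only
    split_ifs with h
    · rw [abs_of_nonneg h]
    · rw [abs_of_neg (not_le.1 h)]
      ring

theorem isLeast_minimax_of_affine (a : R) {b c : ι → R} {d g : κ → R}
    (hb : ∀ i, 0 ≤ b i) (hg : ∀ i, 0 ≤ g i) (f : (ι → R) → (κ → R) → R)
    (hf : ∀ u w, (∀ i, |u i| ≤ b i) → (∀ i, |w i| ≤ g i) → f u w = a + c ⬝ᵥ u + d ⬝ᵥ w) :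
    IsLeast {v | ∃ u : ι → R, (∀ i, |u i| ≤ b i) ∧
        IsGreatest {z | ∃ w : κ → R, (∀ i, |w i| ≤ g i) ∧ z = f u w} v}
      (a - (fun i => |c i|) ⬝ᵥ b + (fun i => |d i|) ⬝ᵥ g) := by
  have inner : ∀ u, (∀ i, |u i| ≤ b i) →
      IsGreatest {z | ∃ w : κ → R, (∀ i, |w i| ≤ g i) ∧ z = f u w}
        (a + c ⬝ᵥ u + (fun i => |d i|) ⬝ᵥ g) := by
    intro u hu
    obtain ⟨w₀, hw₀, hdw₀⟩ := exists_abs_le_dotProduct_eq d hg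
    refine ⟨⟨w₀, hw₀, by rw [hf u w₀ hu hw₀, hdw₀]⟩, ?_⟩
    rintro z ⟨w, hw, rfl⟩
    rw [hf u w hu hw]
    linarith [le_of_abs_le (abs_dotProduct_le_of_abs_le (c := d) hw)]
  obtain ⟨u₀, hu₀, hcu₀⟩ := exists_abs_le_dotProduct_eq c hb
  refine ⟨⟨-u₀, fun i => by simpa using hu₀ i, ?_⟩, ?_⟩
  · convert inner (-u₀) fun i => by simpa using hu₀ i using 1
    rw [dotProduct_neg, hcu₀]
    ring
  · rintro v ⟨u, hu, hv⟩
    rw [hv.unique (inner u hu)]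
    linarith [neg_le_of_abs_le (abs_dotProduct_le_of_abs_le (c := c) hu)]

end Box

section Matrices

variable {R m n l : Type*} [CommRing R] [Fintype m]

lemma dotProduct_add_dotProduct_mulVec_add [Fintype n] [Fintype l] (q s : n → R) (r : m → R)
    (γ : l → R) (A : Matrix n n R) (B : Matrix n m R) (F : Matrix n l R) (x : n → R)
    (u : m → R) (w : l → R) :
    s ⬝ᵥ x + r ⬝ᵥ u - γ ⬝ᵥ w + q ⬝ᵥ (A *ᵥ x + B *ᵥ u + F *ᵥ w)
      = (s + Aᵀ *ᵥ q) ⬝ᵥ x + (r + Bᵀ *ᵥ q) ⬝ᵥ u + (-γ + Fᵀ *ᵥ q) ⬝ᵥ w := by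
  simp only [dotProduct_add, add_dotProduct, neg_dotProduct, dotProduct_mulVec, mulVec_transpose]
  ring

variable [LinearOrder R] [IsStrictOrderedRing R]

lemma abs_mulVec_le_of_abs_le (B : Matrix n m R) {u b : m → R} (hu : ∀ j, |u j| ≤ b j)
    (i : n) : |(B *ᵥ u) i| ≤ ((of fun i j => |B i j|) *ᵥ b) i :=
  abs_dotProduct_le_of_abs_le hu

lemma mulVec_le_mulVec_of_le {M N : Matrix n m R} (hMN : ∀ i j, M i j ≤ N i j) {x : m → R}
    (hx : ∀ j, 0 ≤ x j) (i : n) : (M *ᵥ x) i ≤ (N *ᵥ x) i :=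
  dotProduct_le_dotProduct_of_nonneg_right (hMN i) hx

lemma mulVec_add_mulVec_add_mulVec_nonneg [Fintype n] [Fintype l] {A : Matrix n n R} {B : Matrix n m R}
    {F : Matrix n l R} {E : Matrix m n R} {G : Matrix l n R}
    (hA : ∀ i j, ((of fun i j => |B i j|) * E) i j + ((of fun i j => |F i j|) * G) i j ≤ A i j)
    {x : n → R} {u : m → R} {w : l → R} (hx : ∀ j, 0 ≤ x j) (hu : ∀ i, |u i| ≤ (E *ᵥ x) i)
    (hw : ∀ i, |w i| ≤ (G *ᵥ x) i) (i : n) : 0 ≤ (A *ᵥ x + B *ᵥ u + F *ᵥ w) i := by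
  have hAx := mulVec_le_mulVec_of_le
    (M := (of fun i j => |B i j|) * E + (of fun i j => |F i j|) * G) hA hx i
  rw [add_mulVec, ← mulVec_mulVec, ← mulVec_mulVec] at hAx
  simp only [Pi.add_apply] at hAx ⊢
  linarith [neg_abs_le ((B *ᵥ u) i), neg_abs_le ((F *ᵥ w) i), abs_mulVec_le_of_abs_le B hu i,
    abs_mulVec_le_of_abs_le F hw i]

end Matrices

theorem stmt8_general {n m l : ℕ}
    (A : Matrix (Fin n) (Fin n) ℝ) (B : Matrix (Fin n) (Fin m) ℝ)
    (F : Matrix (Fin n) (Fin l) ℝ)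
    (E : Matrix (Fin m) (Fin n) ℝ) (G : Matrix (Fin l) (Fin n) ℝ)
    (s : Fin n → ℝ) (r : Fin m → ℝ) (γ : Fin l → ℝ)
    (hE : ∀ i j, 0 ≤ E i j) (hG : ∀ i j, 0 ≤ G i j)
    (hA : ∀ i j, ((Matrix.of fun i j => |B i j|) * E) i j
        + ((Matrix.of fun i j => |F i j|) * G) i j ≤ A i j)
    (p : ℕ → Fin n → ℝ)
    (hp0 : p 0 = 0)
    (hpk : ∀ k, p (k+1) = s + Aᵀ *ᵥ (p k)
        - Eᵀ *ᵥ (fun i => |r i + (Bᵀ *ᵥ (p k)) i|)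
        + Gᵀ *ᵥ (fun i => |-γ i + (Fᵀ *ᵥ (p k)) i|))
    (J : ℕ → (Fin n → ℝ) → ℝ)
    (hJ0 : ∀ x, J 0 x = 0)
    (hJ : ∀ k (x : Fin n → ℝ), (∀ i, 0 ≤ x i) →
      IsLeast {v : ℝ | ∃ u : Fin m → ℝ, (∀ i, |u i| ≤ (E *ᵥ x) i) ∧
          IsGreatest {z : ℝ | ∃ w : Fin l → ℝ, (∀ i, |w i| ≤ (G *ᵥ x) i) ∧
              z = s ⬝ᵥ x + r ⬝ᵥ u - γ ⬝ᵥ w + J k (A *ᵥ x + B *ᵥ u + F *ᵥ w)} v}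
        (J (k+1) x)) :
    ∀ k (x : Fin n → ℝ), (∀ i, 0 ≤ x i) → p k ⬝ᵥ x = J k x := by
  intro k
  induction k with
  | zero => intro x _; simp [hp0, hJ0]
  | succ k ih =>
    intro x hx
    have hvalue := isLeast_minimax_of_affine ((s + Aᵀ *ᵥ p k) ⬝ᵥ x)
      (c := r + Bᵀ *ᵥ p k) (d := -γ + Fᵀ *ᵥ p k)
      (fun i => dotProduct_nonneg_of_nonneg (hE i) hx)
      (fun i => dotProduct_nonneg_of_nonneg (hG i) hx)
      (fun u w => s ⬝ᵥ x + r ⬝ᵥ u - γ ⬝ᵥ w + J k (A *ᵥ x + B *ᵥ u + F *ᵥ w)) fun u w hu hw => by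
        rw [← ih _ (mulVec_add_mulVec_add_mulVec_nonneg hA hx hu hw),
          dotProduct_add_dotProduct_mulVec_add]
    rw [← hvalue.unique (hJ k x hx), hpk]
    simp only [add_dotProduct, sub_dotProduct, mulVec_transpose, ← dotProduct_mulVec]
    rfl

theorem stmt8 {n m l : ℕ}
    (A : Matrix (Fin n) (Fin n) ℝ) (B : Matrix (Fin n) (Fin m) ℝ)
    (F : Matrix (Fin n) (Fin l) ℝ)
    (E : Matrix (Fin m) (Fin n) ℝ) (G : Matrix (Fin l) (Fin n) ℝ)
    (s : Fin n → ℝ) (r : Fin m → ℝ) (γ : Fin l → ℝ)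
    (hE : ∀ i j, 0 ≤ E i j) (hG : ∀ i j, 0 ≤ G i j)
    (hA : ∀ i j, ((Matrix.of fun i j => |B i j|) * E) i j
        + ((Matrix.of fun i j => |F i j|) * G) i j ≤ A i j)
    (hs : ∀ i, (Eᵀ *ᵥ (fun j => |r j|)) i - (Gᵀ *ᵥ (fun j => |γ j|)) i ≤ s i)
    (p : ℕ → Fin n → ℝ)
    (hp0 : p 0 = 0)
    (hpk : ∀ k, p (k+1) = s + Aᵀ *ᵥ (p k)
        - Eᵀ *ᵥ (fun i => |r i + (Bᵀ *ᵥ (p k)) i|)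
        + Gᵀ *ᵥ (fun i => |-γ i + (Fᵀ *ᵥ (p k)) i|))
    (J : ℕ → (Fin n → ℝ) → ℝ)
    (hJ0 : ∀ x, J 0 x = 0)
    (hJ : ∀ k (x : Fin n → ℝ), (∀ i, 0 ≤ x i) →
      IsLeast {v : ℝ | ∃ u : Fin m → ℝ, (∀ i, |u i| ≤ (E *ᵥ x) i) ∧
          IsGreatest {z : ℝ | ∃ w : Fin l → ℝ, (∀ i, |w i| ≤ (G *ᵥ x) i) ∧
              z = s ⬝ᵥ x + r ⬝ᵥ u - γ ⬝ᵥ w + J k (A *ᵥ x + B *ᵥ u + F *ᵥ w)} v}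
        (J (k+1) x)) :
    ∀ k (x : Fin n → ℝ), (∀ i, 0 ≤ x i) → p k ⬝ᵥ x = J k x :=
  stmt8_general A B F E G s r γ hE hG hA p hp0 hpk J hJ0 hJ
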